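/- arXiv:math/0610170 — 2 statements merged into one kernel-verified Lean document; each statement's English description precedes it below -/
import Mathlib

section
/- Let (X,d) be a metric space and u : X → ℝ a Lipschitz function. Define |∇u|(x) = limsup_{y→x} |u(x)−u(y)|/d(x,y) for non-isolated x and 0 for isolated x. Then |∇u| is an upper gradient of u: for every path γ : [0,l] → X parametrized proportionally to arclength, |u(γ(l)) − u(γ(0))| ≤ ∫_0^l |∇u|(γ(t)) dt. -/
/-!
Since `γ` is 1-Lipschitz, `u ∘ γ` is Lipschitz, hence absolutely continuous, so
`u (γ l) - u (γ 0) = ∫₀ˡ (u ∘ γ)'`. Near `t`, `|u (γ s) - u (γ t)| ≤ (|∇u|(γ t) + ε) |s - t|`,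
which bounds `|(u ∘ γ)'(t)|` by `|∇u|(γ t)` wherever the derivative exists. The right-hand
integral is a genuine one because
`ofReal |∇u|(x) = ⨅ₙ ⨆_{0 < d(x,y) < 1/(n+1)} ofReal (|u x - u y| / d(x,y))` is a countable
infimum of lower semicontinuous functions of `x`, hence Borel.
-/

open Metric MeasureTheory Set Filter Topology
open scoped ENNReal NNReal Classical

/-- The pointwise Lipschitz constant `|∇u|(x) = limsup_{y → x} |u x - u y| / d(x,y)`,
set to `0` at isolated points. -/
noncomputable def nablaAbs {X : Type*} [MetricSpace X] (u : X → ℝ) (x : X) : ℝ :=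
  if (𝓝[≠] x).NeBot then
    Filter.limsup (fun y => |u x - u y| / dist x y) (𝓝[≠] x)
  else 0

lemma lowerSemicontinuous_iSup_mem {X : Type*} [TopologicalSpace X] {U : Set X} (hU : IsOpen U)
    {g : X → ℝ≥0∞} (hg : ContinuousOn g U) : LowerSemicontinuous fun x => ⨆ _ : x ∈ U, g x := by
  intro x c (hc : c < ⨆ _ : x ∈ U, g x)
  by_cases hx : x ∈ U
  · rw [iSup_pos hx] at hc
    filter_upwards [hU.mem_nhds hx, (hg.continuousAt (hU.mem_nhds hx)).eventually_const_lt hc]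
      with x' hx' hcx'
    simpa only [iSup_pos hx'] using hcx'
  · simp [hx] at hc

section

variable {X : Type*} [MetricSpace X] {u : X → ℝ} {K : ℝ≥0}

lemma LipschitzWith.abs_sub_div_dist_le (hu : LipschitzWith K u) (x y : X) :
    |u x - u y| / dist x y ≤ K := by
  rcases eq_or_ne x y with rfl | h
  · simp
  · rw [div_le_iff₀ (dist_pos.2 h), ← Real.dist_eq]
    exact hu.dist_le_mul x y

lemma nablaAbs_nonneg (hu : LipschitzWith K u) (x : X) : 0 ≤ nablaAbs u x := by
  rw [nablaAbs]
  split_ifs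
  · exact le_limsup_of_frequently_le (.of_forall fun y => by positivity)
      (isBoundedUnder_of ⟨K, hu.abs_sub_div_dist_le x⟩)
  · rfl

lemma nablaAbs_le (hu : LipschitzWith K u) (x : X) : nablaAbs u x ≤ K := by
  rw [nablaAbs]
  split_ifs
  · exact limsup_le_of_le (isCoboundedUnder_le_of_le _ fun y => by positivity)
      (.of_forall (hu.abs_sub_div_dist_le x))
  · exact K.2

-- At an isolated point `𝓝[≠] x = ⊥`, and both sides vanish.
lemma ofReal_nablaAbs (hu : LipschitzWith K u) (x : X) :
    ENNReal.ofReal (nablaAbs u x) =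
      limsup (fun y => ENNReal.ofReal (|u x - u y| / dist x y)) (𝓝[≠] x) := by
  rw [nablaAbs]
  split_ifs with h
  · exact ENNReal.ofReal_mono.map_limsup_of_continuousAt _ ENNReal.continuous_ofReal.continuousAt
      (isBoundedUnder_of ⟨K, hu.abs_sub_div_dist_le x⟩)
      (isCoboundedUnder_le_of_le _ fun y => by positivity)
  · rw [not_neBot.1 h, limsup_bot, ENNReal.ofReal_zero, bot_eq_zero]

lemma eventually_abs_sub_le_nablaAbs_add_mul_dist (hu : LipschitzWith K u) (x : X) {ε : ℝ}
    (hε : 0 < ε) : ∀ᶠ y in 𝓝 x, |u y - u x| ≤ (nablaAbs u x + ε) * dist y x := by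
  have hlt : ∀ᶠ y in 𝓝[≠] x, |u x - u y| / dist x y < nablaAbs u x + ε := by
    by_cases h : (𝓝[≠] x).NeBot
    · refine eventually_lt_of_limsup_lt ?_ (isBoundedUnder_of ⟨K, hu.abs_sub_div_dist_le x⟩)
      rw [nablaAbs, if_pos h]
      exact lt_add_of_pos_right _ hε
    · rw [not_neBot.1 h]
      exact eventually_bot
  filter_upwards [eventually_nhdsWithin_iff.1 hlt] with y hy
  rcases eq_or_ne y x with rfl | hne
  · simp
  · rw [abs_sub_comm, dist_comm]
    exact ((div_lt_iff₀ (dist_pos.2 hne.symm)).1 (hy hne)).le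

lemma abs_deriv_comp_le_nablaAbs_mul (hu : LipschitzWith K u) {γ : ℝ → X} {s : Set ℝ}
    {C : ℝ≥0} (hγ : LipschitzOnWith C γ s) {t : ℝ} (hs : s ∈ 𝓝 t) :
    |deriv (u ∘ γ) t| ≤ nablaAbs u (γ t) * C := by
  by_cases hd : DifferentiableAt ℝ (u ∘ γ) t
  swap
  · rw [deriv_zero_of_not_differentiableAt hd, abs_zero]
    exact mul_nonneg (nablaAbs_nonneg hu _) C.2
  have hL := nablaAbs_nonneg hu (γ t)
  have hγt : Tendsto γ (𝓝 t) (𝓝 (γ t)) := hγ.continuousOn.continuousAt hs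
  have hbound : ∀ ε > 0, |deriv (u ∘ γ) t| ≤ (nablaAbs u (γ t) + ε) * C := by
    intro ε hε
    refine hd.hasDerivAt.le_of_lip' (by positivity) ?_
    filter_upwards [hγt.eventually (eventually_abs_sub_le_nablaAbs_add_mul_dist hu (γ t) hε), hs]
      with r hr hrs
    calc |u (γ r) - u (γ t)| ≤ (nablaAbs u (γ t) + ε) * dist (γ r) (γ t) := hr
      _ ≤ (nablaAbs u (γ t) + ε) * (C * dist r t) := by
        gcongr
        exact hγ.dist_le_mul r hrs t (mem_of_mem_nhds hs)
      _ = (nablaAbs u (γ t) + ε) * C * ‖r - t‖ := by rw [Real.dist_eq, Real.norm_eq_abs]; ring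
  have hlim : Tendsto (fun ε => (nablaAbs u (γ t) + ε) * C) (𝓝[>] 0)
      (𝓝 (nablaAbs u (γ t) * C)) := by
    simpa using ((tendsto_const_nhds.add tendsto_id).mul_const (C : ℝ)).mono_left
      (nhdsWithin_le_nhds (a := (0 : ℝ)))
  exact ge_of_tendsto hlim (eventually_nhdsWithin_of_forall hbound)

lemma measurable_nablaAbs [MeasurableSpace X] [OpensMeasurableSpace X] (hu : LipschitzWith K u) :
    Measurable (nablaAbs u) := by
  have hrepr : nablaAbs u = fun x => (⨅ n : ℕ, ⨆ y ∈ ball x (1 / (n + 1)) ∩ {x}ᶜ,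
      ENNReal.ofReal (|u x - u y| / dist x y)).toReal := by
    funext x
    rw [← ENNReal.toReal_ofReal (nablaAbs_nonneg hu x), ofReal_nablaAbs hu,
      (nhdsWithin_hasBasis nhds_basis_ball_inv_nat_succ _).limsup_eq_iInf_iSup]
    simp only [iInf_true]
  rw [hrepr]
  refine (Measurable.iInf fun n => (lowerSemicontinuous_iSup fun y => ?_).measurable).ennreal_toReal
  refine lowerSemicontinuous_iSup_mem (U := {x | dist y x < 1 / (n + 1)} ∩ {x | y ≠ x}) ?_ ?_
  · exact (isOpen_lt (continuous_const.dist continuous_id) continuous_const).inter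
      (isOpen_ne_fun continuous_const continuous_id)
  · exact ENNReal.continuous_ofReal.comp_continuousOn <|
      (hu.continuous.sub continuous_const).abs.continuousOn.div
        (continuous_id.dist continuous_const).continuousOn fun x hx => dist_ne_zero.2 hx.2.symm

lemma intervalIntegrable_nablaAbs_comp (hu : LipschitzWith K u) {γ : ℝ → X} {a b : ℝ}
    (hγ : ContinuousOn γ (uIcc a b)) :
    IntervalIntegrable (fun t => nablaAbs u (γ t)) volume a b := by
  borelize X
  have : IsFiniteMeasure (volume.restrict (uIcc a b)) := Real.isFiniteMeasure_restrict_Icc _ _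
  refine IntegrableOn.intervalIntegrable (Integrable.of_bound (C := K) ?_ ?_)
  · exact ((measurable_nablaAbs hu).comp_aemeasurable
      (hγ.aemeasurable measurableSet_uIcc)).aestronglyMeasurable
  · exact .of_forall fun t => by
      rw [Real.norm_of_nonneg (nablaAbs_nonneg hu _)]
      exact nablaAbs_le hu _

end

theorem nablaAbs_upperGradient_general {X : Type*} [MetricSpace X]
    (u : X → ℝ) (K : ℝ≥0) (hu : LipschitzWith K u)
    (l : ℝ) (hl : 0 ≤ l) (γ : ℝ → X) (hγ : LipschitzOnWith 1 γ (Set.Icc 0 l)) :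
    |u (γ l) - u (γ 0)| ≤ ∫ t in (0:ℝ)..l, nablaAbs u (γ t) := by
  have hF : LipschitzOnWith K (u ∘ γ) (uIcc 0 l) := by
    simpa [uIcc_of_le hl] using hu.comp_lipschitzOnWith hγ
  have hAC := hF.absolutelyContinuousOnInterval
  have hgrad : ∀ t ∈ Ioo 0 l, |deriv (u ∘ γ) t| ≤ nablaAbs u (γ t) := fun t ht => by
    simpa using abs_deriv_comp_le_nablaAbs_mul hu hγ (Icc_mem_nhds ht.1 ht.2)
  calc |u (γ l) - u (γ 0)| = |∫ t in (0:ℝ)..l, deriv (u ∘ γ) t| :=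
        congr_arg abs hAC.integral_deriv_eq_sub.symm
    _ ≤ ∫ t in (0:ℝ)..l, |deriv (u ∘ γ) t| := intervalIntegral.abs_integral_le_integral_abs hl
    _ ≤ ∫ t in (0:ℝ)..l, nablaAbs u (γ t) :=
        intervalIntegral.integral_mono_on_of_le_Ioo hl hAC.intervalIntegrable_deriv.abs
          (intervalIntegrable_nablaAbs_comp hu (by simpa [uIcc_of_le hl] using hγ.continuousOn))
          hgrad

/-- For a Lipschitz function `u`, `|∇u|` is an upper gradient: for every path `γ` on
`[0,l]` parametrized proportionally to arclength (1-Lipschitz of length `l`),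
`|u(γ l) - u(γ 0)| ≤ ∫₀ˡ |∇u|(γ t) dt`. -/
theorem nablaAbs_upperGradient {X : Type*} [MetricSpace X]
    (u : X → ℝ) (K : ℝ≥0) (hu : LipschitzWith K u)
    (l : ℝ) (hl : 0 ≤ l) (γ : ℝ → X) (hγ : LipschitzOnWith 1 γ (Set.Icc 0 l))
    (hlen : eVariationOn γ (Set.Icc 0 l) = ENNReal.ofReal l) :
    |u (γ l) - u (γ 0)| ≤ ∫ t in (0:ℝ)..l, nablaAbs u (γ t) :=
  nablaAbs_upperGradient_general u K hu l hl γ hγ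
end

section
/- Let (X,d,μ) be a complete, locally compact length space with Borel measure satisfying 0 < μ(B_r(x)) < ∞ for all x, r, and satisfying a Poincaré inequality of type (1,p) for some 1 ≤ p < ∞. If a point x₀ ∈ X satisfies liminf_{r→0} μ(B_r(x₀))/r^p = 0, then x₀ is not a local cut point. -/
/-!
Suppose a connected neighbourhood `U` of `x₀` splits at `x₀` into relatively open pieces `V` and
`W`; by connectedness both accumulate at `x₀`. Test the Poincaré inequality on a fixed ball
`B_R(x₀)` with the function that vanishes on the `W`-side and near `x₀`, and on the `V`-side rises
with slope `1/r` across the annulus `r ≤ d(x₀, ·) ≤ 2r` (it falls back to `0` outside `B_R(x₀)`,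
so that it is defined on all of `X`). Its oscillation on `B_R(x₀)` is bounded below independently
of `r`, while on `B_R(x₀)` its upper gradient is `r⁻¹ · 1_{B_{3r}(x₀)}`. Hence
`μ(B_ρ(x₀)) ≥ κ ρᵖ` for all small `ρ`, contradicting the `liminf`. That this function is an upper
gradient is checked along each curve by a continuous induction.
-/

open Metric MeasureTheory Set Filter Topology
open scoped ENNReal NNReal

noncomputable def genSin (k t : ℝ) : ℝ :=
  if 0 < k then Real.sin (Real.sqrt k * t) / Real.sqrt k
  else if k = 0 then t
  else Real.sinh (Real.sqrt (-k) * t) / Real.sqrt (-k)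

/-- `V_{k,n}(r₁,r₂)`, the volume of an annulus in the model space. -/
noncomputable def Vkn (k n r₁ r₂ : ℝ) : ℝ :=
  (2 * Real.pi ^ (n / 2) / Real.Gamma (n / 2)) * ∫ t in r₁..r₂, genSin k t ^ (n - 1)

def IsLengthSpace (X : Type*) [MetricSpace X] : Prop :=
  ∀ x y : X, ∀ ε > 0, ∃ z : X, max (dist x z) (dist z y) ≤ dist x y / 2 + ε

variable {X : Type*} [MetricSpace X]

/-- The open annulus `A_{r₁,r₂}(x) = B_{r₂}(x) \ closure (B_{r₁}(x))`. -/
def ann (x : X) (r₁ r₂ : ℝ) : Set X := Metric.ball x r₂ \ closure (Metric.ball x r₁)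

/-- `S_{s₁,s₂}(x,U)`: points of the annulus `A_{s₁,s₂}(x)` lying on a minimal geodesic
from `x` to some point of `U`. -/
def geodSlice (x : X) (s₁ s₂ : ℝ) (U : Set X) : Set X :=
  {y | y ∈ ann x s₁ s₂ ∧ ∃ z ∈ U, dist x y + dist y z = dist x z}

/-- The generalized Bishop–Gromov inequality `BG(k,n)` with constant `C`. -/
def SatisfiesBG [MeasurableSpace X] (μ : Measure X) (k n C : ℝ) : Prop :=
  ∀ (x : X) (r₁ r₂ s₁ s₂ : ℝ), 0 ≤ s₁ → s₁ < s₂ → s₁ ≤ r₁ → r₁ < r₂ → s₂ ≤ r₂ →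
    ∀ U : Set X, MeasurableSet U → U ⊆ ann x r₁ r₂ →
      μ U * ENNReal.ofReal (Vkn k n s₁ s₂) ≤
        ENNReal.ofReal C * μ (geodSlice x s₁ s₂ U) * ENNReal.ofReal (Vkn k n r₁ r₂)

/-- A local cut point. -/
def IsLocalCutPoint (x : X) : Prop :=
  ∃ U : Set X, U ∈ 𝓝 x ∧ IsConnected U ∧ ¬ IsPreconnected (U \ {x})

/-- The degree of a point: supremum over connected neighborhoods `U` of `x` of the
number of connected components of `U \ {x}`. -/
noncomputable def degree (x : X) : ℕ∞ :=
  ⨆ U : {U : Set X // U ∈ 𝓝 x ∧ IsConnected U},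
    ENat.card (ConnectedComponents ↥(U.1 \ {x}))

/-- `g : X → [0,∞]` is an upper gradient of `u`: along every path parametrized
proportionally to arclength (1-Lipschitz on `[0,l]`),
`|u(γ l) - u(γ 0)| ≤ ∫₀ˡ g(γ t) dt`. -/
def IsUpperGradient (u : X → ℝ) (g : X → ℝ≥0∞) : Prop :=
  ∀ l : ℝ, 0 ≤ l → ∀ γ : ℝ → X, LipschitzOnWith 1 γ (Set.Icc 0 l) →
    ENNReal.ofReal |u (γ l) - u (γ 0)| ≤ ∫⁻ t in Set.Icc (0:ℝ) l, g (γ t)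

/-- The Poincaré inequality of type `(1,p)`. -/
def PoincareIneq [MeasurableSpace X] (μ : Measure X) (p : ℝ) : Prop :=
  ∀ R > 0, ∃ Cp > 0, ∀ (x : X) (r : ℝ), 0 < r → r ≤ R →
    ∀ u : X → ℝ, Measurable u → ∀ g : X → ℝ≥0∞, Measurable g → IsUpperGradient u g →
      ⨍⁻ y in Metric.ball x r, ENNReal.ofReal
          |u y - ⨍ z in Metric.ball x r, u z ∂μ| ∂μ ≤
        ENNReal.ofReal (Cp * r) * (⨍⁻ y in Metric.ball x r, g y ^ p ∂μ) ^ (1/p)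

theorem volume_inter_Icc_ne_top (A : Set ℝ) (a b : ℝ) : volume (A ∩ Icc a b) ≠ ⊤ :=
  measure_ne_top_of_subset inter_subset_right (by simp [Real.volume_Icc])

theorem volume_inter_Icc_le_add (A : Set ℝ) (a β β' : ℝ) :
    volume (A ∩ Icc a β') ≤ volume (A ∩ Icc a β) + ENNReal.ofReal (β' - β) := by
  calc volume (A ∩ Icc a β') ≤ volume (A ∩ Icc a β ∪ Ioc β β') := by
        refine measure_mono fun t ⟨htA, hat, htβ'⟩ => ?_
        rcases le_or_gt t β with htβ | hβt
        · exact Or.inl ⟨htA, hat, htβ⟩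
        · exact Or.inr ⟨hβt, htβ'⟩
    _ ≤ _ := (measure_union_le _ _).trans_eq (by rw [Real.volume_Ioc])

theorem volume_inter_Icc_add_le {A : Set ℝ} {a β β' : ℝ} (haβ : a ≤ β) (hββ' : β ≤ β')
    (hA : Ioc β β' ⊆ A) :
    volume (A ∩ Icc a β) + ENNReal.ofReal (β' - β) ≤ volume (A ∩ Icc a β') := by
  rw [← Real.volume_Ioc, ← measure_union (disjoint_left.2 fun t ht ht' => not_lt.2 ht.2.2 ht'.1)
    measurableSet_Ioc]
  exact measure_mono (union_subset (inter_subset_inter_right _ (Icc_subset_Icc_right hββ'))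
    fun t ht => ⟨hA ht, haβ.trans ht.1.le, ht.2⟩)

theorem lipschitzWith_volume_inter_Icc (A : Set ℝ) (a : ℝ) :
    LipschitzWith 1 fun β => (volume (A ∩ Icc a β)).toReal := by
  refine LipschitzWith.of_le_add fun β' β => ?_
  calc (volume (A ∩ Icc a β')).toReal
      ≤ (volume (A ∩ Icc a β) + ENNReal.ofReal (dist β' β)).toReal := by
        refine ENNReal.toReal_mono (by simp [volume_inter_Icc_ne_top])
          ((volume_inter_Icc_le_add A a β β').trans ?_)
        gcongr
        exact (le_abs_self _).trans_eq (Real.dist_eq _ _).symm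
    _ = _ := by rw [ENNReal.toReal_add (volume_inter_Icc_ne_top A a β) ENNReal.ofReal_ne_top,
        ENNReal.toReal_ofReal dist_nonneg]

theorem continuousOn_of_eventually_dist_le_mul {α β : Type*} [PseudoMetricSpace α]
    [PseudoMetricSpace β] {f : α → β} {s : Set α} {c : ℝ}
    (h : ∀ x ∈ s, ∀ᶠ y in 𝓝[s] x, dist (f y) (f x) ≤ c * dist y x) : ContinuousOn f s :=
  fun x hx => by
    rw [ContinuousWithinAt, tendsto_iff_dist_tendsto_zero]
    have hlim : Continuous fun y => c * dist y x := by fun_prop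
    exact squeeze_zero' (Eventually.of_forall fun _ => dist_nonneg) (h x hx)
      (by simpa using (hlim.tendsto x).mono_left nhdsWithin_le_nhds)

theorem abs_sub_le_sub_of_eventually {φ ψ : ℝ → ℝ} {a b : ℝ} (hab : a ≤ b)
    (hφ : ContinuousOn φ (Icc a b)) (hψ : ContinuousOn ψ (Icc a b))
    (hstep : ∀ τ ∈ Ico a b, ∀ᶠ β in 𝓝[>] τ, |φ β - φ τ| ≤ ψ β - ψ τ) :
    |φ b - φ a| ≤ ψ b - ψ a := by
  set s := {β | |φ β - φ a| ≤ ψ β - ψ a}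
  have hs : IsClosed (s ∩ Icc a b) := by
    have hcont : ContinuousOn (fun β => ψ β - ψ a - |φ β - φ a|) (Icc a b) := by fun_prop
    convert hcont.preimage_isClosed_of_isClosed isClosed_Icc (isClosed_Ici (a := 0)) using 1
    ext β
    simp [s, sub_nonneg, and_comm]
  refine hs.Icc_subset_of_forall_mem_nhdsWithin (by simp [s]) (fun τ ⟨hτs, hτ⟩ => ?_) ⟨hab, le_rfl⟩
  filter_upwards [hstep τ hτ] with β hβ
  have : |φ β - φ a| ≤ |φ β - φ τ| + |φ τ - φ a| := abs_sub_le _ _ _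
  simp only [s, mem_ofPred_eq] at hτs ⊢
  linarith

theorem abs_sub_le_mul_volume_of_locally_const {φ : ℝ → ℝ} {A : Set ℝ} {a b c : ℝ} (hab : a ≤ b)
    (hA : IsOpen A) (hc : 0 ≤ c)
    (hφ_lip : ∀ τ ∈ Icc a b, ∀ᶠ β in 𝓝[Icc a b] τ, |φ β - φ τ| ≤ c * |β - τ|)
    (hφ_const : ∀ τ ∈ Icc a b \ A, ∀ᶠ β in 𝓝[Icc a b] τ, φ β = φ τ) :
    |φ b - φ a| ≤ c * (volume (A ∩ Icc a b)).toReal := by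
  have hfin := volume_inter_Icc_ne_top A a
  set ψ : ℝ → ℝ := fun β => c * (volume (A ∩ Icc a β)).toReal
  have hψ_mono : Monotone ψ := fun β β' h => mul_le_mul_of_nonneg_left
    (ENNReal.toReal_mono (hfin β') (measure_mono (inter_subset_inter_right _
      (Icc_subset_Icc_right h)))) hc
  have hψa : 0 ≤ ψ a := by positivity
  suffices h : |φ b - φ a| ≤ ψ b - ψ a by linarith
  refine abs_sub_le_sub_of_eventually hab (continuousOn_of_eventually_dist_le_mul fun τ hτ =>
      (hφ_lip τ hτ).mono fun β h => by rwa [Real.dist_eq, Real.dist_eq])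
    (continuous_const.mul (lipschitzWith_volume_inter_Icc A a).continuous).continuousOn
    fun τ hτ => ?_
  have hle : 𝓝[>] τ ≤ 𝓝[Icc a b] τ := nhdsWithin_le_of_mem
    (mem_of_superset (Ioo_mem_nhdsGT hτ.2) fun β hβ => ⟨hτ.1.trans hβ.1.le, hβ.2.le⟩)
  by_cases hτA : τ ∈ A
  · obtain ⟨l, hτl, hl⟩ := exists_Ico_subset_of_mem_nhds (hA.mem_nhds hτA) ⟨τ + 1, by linarith⟩
    filter_upwards [hle (hφ_lip τ (Ico_subset_Icc_self hτ)), Ioo_mem_nhdsGT hτl]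
      with β hβ ⟨hτβ, hβl⟩
    have hvol := ENNReal.toReal_mono (hfin β) (volume_inter_Icc_add_le hτ.1 hτβ.le
      fun t ht => hl ⟨ht.1.le, ht.2.trans_lt hβl⟩)
    rw [ENNReal.toReal_add (hfin τ) ENNReal.ofReal_ne_top,
      ENNReal.toReal_ofReal (sub_nonneg.2 hτβ.le)] at hvol
    calc |φ β - φ τ| ≤ c * |β - τ| := hβ
      _ = c * (β - τ) := by rw [abs_of_pos (sub_pos.2 hτβ)]
      _ ≤ ψ β - ψ τ := by simp only [ψ]; nlinarith
  · filter_upwards [hle (hφ_const τ ⟨Ico_subset_Icc_self hτ, hτA⟩), self_mem_nhdsWithin]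
      with β hβ hτβ
    rw [hβ, sub_self, abs_zero]
    exact sub_nonneg.2 (hψ_mono (le_of_lt hτβ))

theorem isUpperGradient_indicator_of_locally_const {u : X → ℝ} {O : Set X} (hO : IsOpen O)
    {c : ℝ} (hc : 0 ≤ c) (hu_lip : ∀ y, ∀ᶠ z in 𝓝 y, |u z - u y| ≤ c * dist z y)
    (hu_const : ∀ y ∉ O, ∀ᶠ z in 𝓝 y, u z = u y) :
    IsUpperGradient u (O.indicator fun _ => ENNReal.ofReal c) := by
  intro l hl γ hγ
  obtain ⟨V, hV, hVO⟩ := _root_.continuousOn_iff'.1 hγ.continuousOn O hO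
  have hmemV : ∀ t ∈ Icc 0 l, t ∈ V ↔ γ t ∈ O := fun t ht => by
    simpa [ht] using (congrArg (t ∈ ·) hVO).symm
  have hγd : ∀ τ ∈ Icc 0 l, ∀ β ∈ Icc 0 l, dist (γ β) (γ τ) ≤ |β - τ| := fun τ hτ β hβ => by
    simpa [Real.dist_eq] using hγ.dist_le_mul β hβ τ hτ
  have key := abs_sub_le_mul_volume_of_locally_const (φ := u ∘ γ) hl hV hc
    (fun τ hτ => by
      filter_upwards [hγ.continuousOn τ hτ (hu_lip (γ τ)), self_mem_nhdsWithin] with β hβ hβI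
      exact hβ.trans (mul_le_mul_of_nonneg_left (hγd τ hτ β hβI) hc))
    (fun τ hτ => hγ.continuousOn τ hτ.1 (hu_const (γ τ) ((hmemV τ hτ.1).not.1 hτ.2)))
  calc ENNReal.ofReal |u (γ l) - u (γ 0)|
      ≤ ENNReal.ofReal (c * (volume (V ∩ Icc 0 l)).toReal) := ENNReal.ofReal_le_ofReal key
    _ = ∫⁻ t in Icc 0 l, V.indicator (fun _ => ENNReal.ofReal c) t := by
      rw [lintegral_indicator_const hV.measurableSet, Measure.restrict_apply hV.measurableSet,
        ENNReal.ofReal_mul hc, ENNReal.ofReal_toReal (volume_inter_Icc_ne_top V 0 l)]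
    _ = ∫⁻ t in Icc 0 l, O.indicator (fun _ => ENNReal.ofReal c) (γ t) :=
      setLIntegral_congr_fun measurableSet_Icc fun t ht => by
        by_cases h : t ∈ V
        · rw [indicator_of_mem h, indicator_of_mem ((hmemV t ht).1 h)]
        · rw [indicator_of_notMem h, indicator_of_notMem ((hmemV t ht).not.1 h)]

theorem IsPreconnected.mem_closure_of_separation {α : Type*} [TopologicalSpace α] [T1Space α]
    {U V W : Set α} {x : α} (hU : IsPreconnected U) (hx : x ∈ U) (hV : IsOpen V) (hW : IsOpen W)
    (hcover : U \ {x} ⊆ V ∪ W) (hdisj : (U \ {x}) ∩ (V ∩ W) = ∅)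
    (hne : ((U \ {x}) ∩ V).Nonempty) :
    x ∈ closure ((U \ {x}) ∩ V) := by
  by_contra hxC
  have hcover' : U ⊆ V ∩ {x}ᶜ ∪ (closure ((U \ {x}) ∩ V))ᶜ := by
    intro y hyU
    by_cases hy : y ∈ closure ((U \ {x}) ∩ V)
    · have hyx : y ≠ x := fun h => hxC (h ▸ hy)
      refine Or.inl ⟨(hcover ⟨hyU, hyx⟩).resolve_right fun hyW => ?_, hyx⟩
      obtain ⟨z, hzW, hzU, hzV⟩ := mem_closure_iff.1 hy W hW hyW
      exact (eq_empty_iff_forall_notMem.1 hdisj) z ⟨hzU, hzV, hzW⟩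
    · exact Or.inr hy
  obtain ⟨y, hyU, hyV, hyC⟩ := hU _ _ (hV.inter isOpen_compl_singleton)
    isClosed_closure.isOpen_compl hcover'
    (hne.mono fun z hz => ⟨hz.1.1, hz.2, hz.1.2⟩) ⟨x, hx, hxC⟩
  exact hyC (subset_closure ⟨⟨hyU, hyV.2⟩, hyV.1⟩)

theorem indicator_eventuallyEq_self_or_zero {α M : Type*} [TopologicalSpace α] [Zero M]
    {V W T : Set α} {f : α → M} (hV : IsOpen V) (hW : IsOpen W) (hT : IsOpen T)
    (hcover : T ⊆ V ∪ W) (hdisj : T ∩ (V ∩ W) = ∅) {y : α} (hy : y ∈ T ∨ f =ᶠ[𝓝 y] 0) :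
    V.indicator f =ᶠ[𝓝 y] f ∨ V.indicator f =ᶠ[𝓝 y] 0 := by
  rcases hy with hyT | hf
  · rcases hcover hyT with hyV | hyW
    · exact Or.inl (eventuallyEq_of_mem (hV.mem_nhds hyV) fun z hz => indicator_of_mem hz f)
    · refine Or.inr (eventuallyEq_of_mem ((hT.inter hW).mem_nhds ⟨hyT, hyW⟩) fun z hz =>
        indicator_of_notMem (fun hzV => ?_) f)
      exact (eq_empty_iff_forall_notMem.1 hdisj) z ⟨hz.1, hzV, hz.2⟩
  · exact Or.inr (hf.mono fun z hz => indicator_apply_eq_zero.2 fun _ => hz)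

noncomputable def plateau (r R t : ℝ) : ℝ := max 0 (min 1 (min (t - r) (R - t) / r))

section plateau

variable {r R t : ℝ}

theorem plateau_eq_zero_of_le (hr : 0 ≤ r) (ht : t ≤ r) : plateau r R t = 0 :=
  max_eq_left <| (min_le_right _ _).trans <|
    div_nonpos_of_nonpos_of_nonneg ((min_le_left _ _).trans (by linarith)) hr

theorem plateau_eq_zero_of_ge (hr : 0 ≤ r) (ht : R ≤ t) : plateau r R t = 0 :=
  max_eq_left <| (min_le_right _ _).trans <|
    div_nonpos_of_nonpos_of_nonneg ((min_le_right _ _).trans (by linarith)) hr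

theorem plateau_eq_one (hr : 0 < r) (h₁ : 2 * r ≤ t) (h₂ : t ≤ R - r) : plateau r R t = 1 := by
  rw [plateau, min_eq_left ((one_le_div hr).2 (le_min (by linarith) (by linarith))),
    max_eq_right zero_le_one]

theorem abs_plateau_sub_le (hr : 0 ≤ r) (s t : ℝ) :
    |plateau r R s - plateau r R t| ≤ |s - t| / r := by
  have hclamp (a b : ℝ) : |max 0 (min 1 a) - max 0 (min 1 b)| ≤ |a - b| := by
    simpa using (abs_max_sub_max_le_max 0 (min 1 a) 0 (min 1 b)).trans
      (by simpa using abs_min_sub_min_le_max 1 a 1 b)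
  have hmin : |min (s - r) (R - s) - min (t - r) (R - t)| ≤ |s - t| := by
    refine (abs_min_sub_min_le_max _ _ _ _).trans_eq ?_
    rw [sub_sub_sub_cancel_right, sub_sub_sub_cancel_left, abs_sub_comm t s, max_self]
  calc |plateau r R s - plateau r R t|
      ≤ |min (s - r) (R - s) / r - min (t - r) (R - t) / r| := hclamp _ _
    _ = |min (s - r) (R - s) - min (t - r) (R - t)| / r := by
        rw [← sub_div, abs_div, abs_of_nonneg hr]
    _ ≤ |s - t| / r := div_le_div_of_nonneg_right hmin hr

end plateau

noncomputable def sidePlateau (V : Set X) (x₀ : X) (r R : ℝ) : X → ℝ :=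
  V.indicator fun y => plateau r R (dist y x₀)

section sidePlateau

variable {V W : Set X} {x₀ : X} {r R : ℝ}

theorem sidePlateau_eventuallyEq (hV : IsOpen V) (hW : IsOpen W)
    (hcover : ball x₀ (3 * R) \ {x₀} ⊆ V ∪ W) (hdisj : (ball x₀ (3 * R) \ {x₀}) ∩ (V ∩ W) = ∅)
    (hr : 0 < r) (y : X) :
    sidePlateau V x₀ r (2 * R) =ᶠ[𝓝 y] (fun z => plateau r (2 * R) (dist z x₀)) ∨
      sidePlateau V x₀ r (2 * R) =ᶠ[𝓝 y] 0 := by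
  refine indicator_eventuallyEq_self_or_zero hV hW (isOpen_ball.sdiff isClosed_singleton)
    hcover hdisj ?_
  have hdist : Continuous fun z => dist z x₀ := continuous_id.dist continuous_const
  by_cases hyr : dist y x₀ < r
  · exact Or.inr <| eventually_of_mem ((isOpen_lt hdist continuous_const).mem_nhds hyr)
      fun z hz => plateau_eq_zero_of_le hr.le (le_of_lt hz)
  by_cases hyR : 2 * R < dist y x₀
  · exact Or.inr <| eventually_of_mem ((isOpen_lt continuous_const hdist).mem_nhds hyR)
      fun z hz => plateau_eq_zero_of_ge hr.le (le_of_lt hz)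
  refine Or.inl ⟨mem_ball.2 (by linarith [not_lt.1 hyr, not_lt.1 hyR]), fun hy => hyr ?_⟩
  rwa [mem_singleton_iff.1 hy, dist_self]

theorem isUpperGradient_sidePlateau (hV : IsOpen V) (hW : IsOpen W)
    (hcover : ball x₀ (3 * R) \ {x₀} ⊆ V ∪ W) (hdisj : (ball x₀ (3 * R) \ {x₀}) ∩ (V ∩ W) = ∅)
    (hr : 0 < r) :
    IsUpperGradient (sidePlateau V x₀ r (2 * R))
      ((ball x₀ (3 * r) ∪ (closedBall x₀ R)ᶜ).indicator fun _ => ENNReal.ofReal r⁻¹) := by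
  have hloc := sidePlateau_eventuallyEq hV hW hcover hdisj hr
  have hdist : Continuous fun z => dist z x₀ := continuous_id.dist continuous_const
  refine isUpperGradient_indicator_of_locally_const
    (isOpen_ball.union isClosed_closedBall.isOpen_compl) (inv_nonneg.2 hr.le)
    (fun y => ?_) (fun y hy => ?_)
  · rcases hloc y with h | h <;> filter_upwards [h] with z hz <;> rw [hz, h.eq_of_nhds]
    · calc |plateau r (2 * R) (dist z x₀) - plateau r (2 * R) (dist y x₀)|
          ≤ |dist z x₀ - dist y x₀| / r := abs_plateau_sub_le hr.le _ _
        _ ≤ dist z y / r := div_le_div_of_nonneg_right (abs_dist_sub_le z y x₀) hr.le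
        _ = r⁻¹ * dist z y := div_eq_inv_mul _ _
    · simp only [Pi.zero_apply, sub_self, abs_zero]
      positivity
  · simp only [mem_union, mem_ball, mem_compl_iff, mem_closedBall, not_or, not_lt, not_not] at hy
    have hone : (fun z => plateau r (2 * R) (dist z x₀)) =ᶠ[𝓝 y] fun _ => 1 :=
      eventually_of_mem (((isOpen_lt continuous_const hdist).inter
        (isOpen_lt hdist continuous_const)).mem_nhds (⟨by linarith, by linarith⟩ :
          2 * r < dist y x₀ ∧ dist y x₀ < 2 * R - r))
        fun z hz => plateau_eq_one hr hz.1.le hz.2.le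
    have hconst {c : ℝ} (h : sidePlateau V x₀ r (2 * R) =ᶠ[𝓝 y] fun _ => c) :
        ∀ᶠ z in 𝓝 y, sidePlateau V x₀ r (2 * R) z = sidePlateau V x₀ r (2 * R) y :=
      h.mono fun z hz => hz.trans h.eq_of_nhds.symm
    rcases hloc y with h | h
    · exact hconst (h.trans hone)
    · exact hconst h

theorem sidePlateau_eq_one (hr : 0 < r) {y : X} (hyV : y ∈ V)
    (h₁ : 2 * r ≤ dist y x₀) (h₂ : dist y x₀ ≤ R) : sidePlateau V x₀ r (2 * R) y = 1 := by
  rw [sidePlateau, indicator_of_mem hyV]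
  exact plateau_eq_one hr h₁ (by linarith)

theorem sidePlateau_eq_zero {T : Set X} (hdisj : T ∩ (V ∩ W) = ∅) {y : X} (hyW : y ∈ W)
    (hyT : y ∈ T) (R' : ℝ) : sidePlateau V x₀ r R' y = 0 :=
  indicator_of_notMem (fun hyV => eq_empty_iff_forall_notMem.1 hdisj y ⟨hyT, hyV, hyW⟩) _

end sidePlateau

theorem le_setLAverage_abs_sub {α : Type*} [MeasurableSpace α] {μ : Measure α} {s A B : Set α}
    {u : α → ℝ} {a b : ℝ} (hA : MeasurableSet A) (hB : MeasurableSet B) (hAB : Disjoint A B)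
    (hAs : A ⊆ s) (hBs : B ⊆ s) (huA : ∀ y ∈ A, u y = a) (huB : ∀ y ∈ B, u y = b) (c : ℝ) :
    ENNReal.ofReal |a - b| * min (μ A) (μ B) / μ s ≤ ⨍⁻ y in s, ENNReal.ofReal |u y - c| ∂μ := by
  rw [setLAverage_eq]
  gcongr
  have hab : ENNReal.ofReal |a - b| ≤ ENNReal.ofReal |a - c| + ENNReal.ofReal |b - c| := by
    rw [← ENNReal.ofReal_add (abs_nonneg _) (abs_nonneg _), abs_sub_comm b c]
    exact ENNReal.ofReal_le_ofReal (abs_sub_le a c b)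
  calc ENNReal.ofReal |a - b| * min (μ A) (μ B)
      ≤ ENNReal.ofReal |a - c| * μ A + ENNReal.ofReal |b - c| * μ B := by
        grw [hab, add_mul]
        gcongr
        exacts [min_le_left _ _, min_le_right _ _]
    _ = (∫⁻ y in A, ENNReal.ofReal |u y - c| ∂μ) + ∫⁻ y in B, ENNReal.ofReal |u y - c| ∂μ := by
        rw [setLIntegral_congr_fun hA fun y hy => by rw [huA y hy],
          setLIntegral_congr_fun hB fun y hy => by rw [huB y hy], setLIntegral_const,
          setLIntegral_const]
    _ = ∫⁻ y in A ∪ B, ENNReal.ofReal |u y - c| ∂μ := (lintegral_union hB hAB).symm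
    _ ≤ ∫⁻ y in s, ENNReal.ofReal |u y - c| ∂μ := lintegral_mono_set (union_subset hAs hBs)

theorem setLAverage_indicator_rpow_mul_le {α : Type*} [MeasurableSpace α] {μ : Measure α}
    {s t O : Set α} (hs : MeasurableSet s) (ht : MeasurableSet t) (hst : s ∩ O ⊆ t)
    (k : ℝ≥0∞) {p : ℝ} (hp : 0 < p) :
    (⨍⁻ y in s, O.indicator (fun _ => k) y ^ p ∂μ) * μ s ≤ k ^ p * μ t := by
  rw [setLAverage_eq, mul_comm]
  calc μ s * ((∫⁻ y in s, O.indicator (fun _ => k) y ^ p ∂μ) / μ s)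
      ≤ ∫⁻ y in s, O.indicator (fun _ => k) y ^ p ∂μ := ENNReal.mul_div_le
    _ ≤ ∫⁻ y in s, t.indicator (fun _ => k ^ p) y ∂μ := by
        refine setLIntegral_mono' hs fun y hy => ?_
        by_cases hyO : y ∈ O
        · rw [indicator_of_mem hyO, indicator_of_mem (hst ⟨hy, hyO⟩)]
        · rw [indicator_of_notMem hyO, ENNReal.zero_rpow_of_pos hp]
          exact zero_le
    _ ≤ ∫⁻ y, t.indicator (fun _ => k ^ p) y ∂μ := setLIntegral_le_lintegral _ _
    _ = k ^ p * μ t := lintegral_indicator_const ht _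

theorem exists_rpow_mul_measure_le_of_poincare [MeasurableSpace X] [BorelSpace X]
    {μ : Measure X} {p : ℝ} (hp : 0 < p) (hP : PoincareIneq μ p) {x₀ : X} {R : ℝ} (hR : 0 < R)
    {V W : Set X} (hV : IsOpen V) (hW : IsOpen W) (hcover : ball x₀ (3 * R) \ {x₀} ⊆ V ∪ W)
    (hdisj : (ball x₀ (3 * R) \ {x₀}) ∩ (V ∩ W) = ∅) :
    ∃ C > 0, ∀ r > 0,
      (min (μ (V ∩ (ball x₀ R \ closedBall x₀ (2 * r)))) (μ (W ∩ (ball x₀ R \ {x₀}))) /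
        μ (ball x₀ R)) ^ p * μ (ball x₀ R) ≤ ENNReal.ofReal (C / r) ^ p * μ (ball x₀ (3 * r)) := by
  obtain ⟨Cp, hCp, hPI⟩ := hP R hR
  refine ⟨Cp * R, by positivity, fun r hr => ?_⟩
  set u := sidePlateau V x₀ r (2 * R)
  set O := ball x₀ (3 * r) ∪ (closedBall x₀ R)ᶜ
  set g : X → ℝ≥0∞ := O.indicator fun _ => ENNReal.ofReal r⁻¹
  set P := ⨍⁻ y in ball x₀ R, g y ^ p ∂μ
  have hu : Measurable u :=
    (by unfold plateau; fun_prop : Continuous fun y => plateau r (2 * R) (dist y x₀)).measurable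
      |>.indicator hV.measurableSet
  have hg : Measurable g := measurable_const.indicator
    (isOpen_ball.union isClosed_closedBall.isOpen_compl).measurableSet
  have hT : ball x₀ R ⊆ ball x₀ (3 * R) := ball_subset_ball (by linarith)
  have hlower : min (μ (V ∩ (ball x₀ R \ closedBall x₀ (2 * r)))) (μ (W ∩ (ball x₀ R \ {x₀}))) /
      μ (ball x₀ R) ≤ ⨍⁻ y in ball x₀ R, ENNReal.ofReal |u y - ⨍ z in ball x₀ R, u z ∂μ| ∂μ := by
    have hAB : Disjoint (V ∩ (ball x₀ R \ closedBall x₀ (2 * r))) (W ∩ (ball x₀ R \ {x₀})) :=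
      disjoint_left.2 fun y hyA hyB =>
        eq_empty_iff_forall_notMem.1 hdisj y ⟨⟨hT hyB.2.1, hyB.2.2⟩, hyA.1, hyB.1⟩
    simpa using le_setLAverage_abs_sub (μ := μ) (a := 1) (b := 0)
      (hV.inter (isOpen_ball.sdiff isClosed_closedBall)).measurableSet
      (hW.inter (isOpen_ball.sdiff isClosed_singleton)).measurableSet hAB
      (inter_subset_right.trans sdiff_subset) (inter_subset_right.trans sdiff_subset)
      (fun y hy => sidePlateau_eq_one hr hy.1 (not_le.1 hy.2.2).le (mem_ball.1 hy.2.1).le)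
      (fun y hy => sidePlateau_eq_zero hdisj hy.1 ⟨hT hy.2.1, hy.2.2⟩ _) _
  have hupper : P * μ (ball x₀ R) ≤ ENNReal.ofReal r⁻¹ ^ p * μ (ball x₀ (3 * r)) :=
    setLAverage_indicator_rpow_mul_le isOpen_ball.measurableSet isOpen_ball.measurableSet
      (fun y ⟨hyR, hyO⟩ => hyO.resolve_right (not_not.2 (ball_subset_closedBall hyR))) _ hp
  calc _ ≤ (ENNReal.ofReal (Cp * R) * P ^ (1 / p)) ^ p * μ (ball x₀ R) := by
        gcongr
        exact hlower.trans (hPI x₀ R hR le_rfl u hu g hg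
          (isUpperGradient_sidePlateau hV hW hcover hdisj hr))
    _ = ENNReal.ofReal (Cp * R) ^ p * (P * μ (ball x₀ R)) := by
        rw [ENNReal.mul_rpow_of_nonneg _ _ hp.le, ← ENNReal.rpow_mul, one_div_mul_cancel hp.ne',
          ENNReal.rpow_one, mul_assoc]
    _ ≤ ENNReal.ofReal (Cp * R) ^ p * (ENNReal.ofReal r⁻¹ ^ p * μ (ball x₀ (3 * r))) := by
        gcongr
    _ = ENNReal.ofReal (Cp * R / r) ^ p * μ (ball x₀ (3 * r)) := by
        rw [← mul_assoc, ← ENNReal.mul_rpow_of_nonneg _ _ hp.le,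
          ← ENNReal.ofReal_mul' (inv_nonneg.2 hr.le), div_eq_mul_inv]

theorem exists_pos_le_measure_ball_div_rpow [MeasurableSpace X] [BorelSpace X] {μ : Measure X}
    [μ.IsOpenPosMeasure] {p : ℝ} (hp : 0 < p) (hP : PoincareIneq μ p) {x₀ : X} {R : ℝ}
    (hR : 0 < R) (hfin : μ (ball x₀ R) ≠ ⊤) {V W : Set X} (hV : IsOpen V) (hW : IsOpen W)
    (hcover : ball x₀ (3 * R) \ {x₀} ⊆ V ∪ W) (hdisj : (ball x₀ (3 * R) \ {x₀}) ∩ (V ∩ W) = ∅)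
    (hVne : (V ∩ (ball x₀ R \ {x₀})).Nonempty) (hWne : (W ∩ (ball x₀ R \ {x₀})).Nonempty) :
    ∃ κ > 0, ∀ᶠ ρ in 𝓝[>] 0, κ ≤ μ (ball x₀ ρ) / ENNReal.ofReal (ρ ^ p) := by
  obtain ⟨C, hC, hcap⟩ :=
    exists_rpow_mul_measure_le_of_poincare hp hP hR hV hW hcover hdisj
  obtain ⟨y, hyV, hyR, hyx⟩ := hVne
  have hy : 0 < dist y x₀ := dist_pos.2 hyx
  set A := V ∩ (ball x₀ R \ closedBall x₀ (dist y x₀ / 2))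
  set B := W ∩ (ball x₀ R \ {x₀})
  set M := μ (ball x₀ R)
  set c := ENNReal.ofReal (3 * C) ^ p
  have hM : M ≠ 0 := (isOpen_ball.measure_pos μ ⟨x₀, mem_ball_self hR⟩).ne'
  have hA : 0 < μ A := (hV.inter (isOpen_ball.sdiff isClosed_closedBall)).measure_pos μ
    ⟨y, hyV, hyR, by rw [mem_closedBall, not_le]; linarith⟩
  have hB : 0 < μ B := (hW.inter (isOpen_ball.sdiff isClosed_singleton)).measure_pos μ hWne
  have hc : c ≠ 0 := (ENNReal.rpow_pos_of_nonneg (by simpa using hC) hp.le).ne'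
  have hc_top : c ≠ ⊤ := ENNReal.rpow_ne_top_of_nonneg hp.le ENNReal.ofReal_ne_top
  refine ⟨(min (μ A) (μ B) / M) ^ p * M / c, ENNReal.div_pos (mul_ne_zero
    (ENNReal.rpow_pos_of_nonneg (ENNReal.div_pos (lt_min hA hB).ne' hfin) hp.le).ne' hM) hc_top,
    ?_⟩
  filter_upwards [Ioo_mem_nhdsGT (show 0 < 3 * (dist y x₀ / 4) by positivity)] with ρ ⟨hρ, hρy⟩
  rw [ENNReal.le_div_iff_mul_le (Or.inl (ENNReal.ofReal_pos.2 (Real.rpow_pos_of_pos hρ p)).ne')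
    (Or.inl ENNReal.ofReal_ne_top)]
  have key := hcap (ρ / 3) (by positivity)
  rw [mul_div_cancel₀ ρ three_ne_zero] at key
  have hAρ : μ A ≤ μ (V ∩ (ball x₀ R \ closedBall x₀ (2 * (ρ / 3)))) :=
    measure_mono (inter_subset_inter_right _ (sdiff_subset_sdiff_right
      (closedBall_subset_closedBall (by linarith))))
  have hscale : ENNReal.ofReal (C / (ρ / 3)) ^ p * ENNReal.ofReal (ρ ^ p) = c := by
    rw [← ENNReal.ofReal_rpow_of_nonneg hρ.le hp.le, ← ENNReal.mul_rpow_of_nonneg _ _ hp.le,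
      ← ENNReal.ofReal_mul (by positivity)]
    congr 2
    field_simp
  calc (min (μ A) (μ B) / M) ^ p * M / c * ENNReal.ofReal (ρ ^ p)
      ≤ ENNReal.ofReal (C / (ρ / 3)) ^ p * μ (ball x₀ ρ) / c * ENNReal.ofReal (ρ ^ p) := by
        grw [← key, hAρ]
    _ = μ (ball x₀ ρ) * (ENNReal.ofReal (C / (ρ / 3)) ^ p * ENNReal.ofReal (ρ ^ p)) / c := by
        simp only [div_eq_mul_inv]; ring
    _ = μ (ball x₀ ρ) := by rw [hscale, ENNReal.mul_div_cancel_right hc hc_top]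

theorem isOpenPosMeasure_of_measure_ball_pos [MeasurableSpace X] {μ : Measure X}
    (h : ∀ (x : X) (r : ℝ), 0 < r → 0 < μ (ball x r)) : μ.IsOpenPosMeasure where
  open_pos U hU := fun ⟨x, hx⟩ => by
    obtain ⟨ε, hε, hεU⟩ := Metric.isOpen_iff.1 hU x hx
    exact ((h x ε hε).trans_le (measure_mono hεU)).ne'

theorem not_localCutPoint_of_poincare_general {X : Type*} [MetricSpace X] [MeasurableSpace X]
    [BorelSpace X] (μ : Measure X)
    (hμ : ∀ (x : X) (r : ℝ), 0 < r → 0 < μ (Metric.ball x r) ∧ μ (Metric.ball x r) < ⊤)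
    (p : ℝ) (hp : 1 ≤ p) (hP : PoincareIneq μ p) (x₀ : X)
    (hliminf : Filter.liminf
      (fun r : ℝ => μ (Metric.ball x₀ r) / ENNReal.ofReal (r ^ p)) (𝓝[>] 0) = 0) :
    ¬ IsLocalCutPoint x₀ := by
  rintro ⟨U, hU, hUconn, hcut⟩
  have := isOpenPosMeasure_of_measure_ball_pos fun x r hr => (hμ x r hr).1
  obtain ⟨V, W, hV, hW, hcover, hVne, hWne, hdisj⟩ : ∃ V W, IsOpen V ∧ IsOpen W ∧
      U \ {x₀} ⊆ V ∪ W ∧ ((U \ {x₀}) ∩ V).Nonempty ∧ ((U \ {x₀}) ∩ W).Nonempty ∧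
      (U \ {x₀}) ∩ (V ∩ W) = ∅ := by
    simpa [IsPreconnected, not_nonempty_iff_eq_empty] using hcut
  obtain ⟨R, hR, hRU⟩ : ∃ R > 0, ball x₀ (3 * R) ⊆ U := by
    obtain ⟨ε, hε, hεU⟩ := Metric.mem_nhds_iff.1 hU
    exact ⟨ε / 3, by positivity, by rwa [mul_div_cancel₀ ε three_ne_zero]⟩
  have hpunct : ball x₀ (3 * R) \ {x₀} ⊆ U \ {x₀} := sdiff_subset_sdiff_left hRU
  have hnear {V' : Set X} (h : x₀ ∈ closure ((U \ {x₀}) ∩ V')) :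
      (V' ∩ (ball x₀ R \ {x₀})).Nonempty := by
    obtain ⟨y, ⟨⟨-, hyx⟩, hyV⟩, hy⟩ := Metric.mem_closure_iff.1 h R hR
    exact ⟨y, hyV, mem_ball'.2 hy, hyx⟩
  have hx₀ := mem_of_mem_nhds hU
  obtain ⟨κ, hκ, hgrowth⟩ := exists_pos_le_measure_ball_div_rpow (by linarith) hP hR
    (hμ x₀ R hR).2.ne hV hW (hpunct.trans hcover)
    (subset_eq_empty (inter_subset_inter_left _ hpunct) hdisj)
    (hnear (hUconn.isPreconnected.mem_closure_of_separation hx₀ hV hW hcover hdisj hVne))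
    (hnear (hUconn.isPreconnected.mem_closure_of_separation hx₀ hW hV (by rwa [union_comm])
      (by rwa [inter_comm W]) hWne))
  refine hκ.ne' (le_antisymm ?_ zero_le)
  rw [← hliminf]
  exact le_liminf_of_le (by isBoundedDefault) hgrowth

/-- In a space satisfying a `(1,p)`-Poincaré inequality, a point `x₀` with
`liminf_{r→0} μ(B_r(x₀))/rᵖ = 0` is not a local cut point. -/
theorem not_localCutPoint_of_poincare {X : Type*} [MetricSpace X] [MeasurableSpace X]
    [BorelSpace X] [CompleteSpace X] [LocallyCompactSpace X]
    (hlen : IsLengthSpace X) (μ : Measure X)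
    (hμ : ∀ (x : X) (r : ℝ), 0 < r → 0 < μ (Metric.ball x r) ∧ μ (Metric.ball x r) < ⊤)
    (p : ℝ) (hp : 1 ≤ p) (hP : PoincareIneq μ p) (x₀ : X)
    (hliminf : Filter.liminf
      (fun r : ℝ => μ (Metric.ball x₀ r) / ENNReal.ofReal (r ^ p)) (𝓝[>] 0) = 0) :
    ¬ IsLocalCutPoint x₀ :=
  not_localCutPoint_of_poincare_general μ hμ p hp hP x₀ hliminf
end
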